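/- arXiv:1508.02474 — 3 statements merged into one kernel-verified Lean document; each statement's English description precedes it below -/
import Mathlib

section
/- For each integer j ∈ ℤ and points s, t ∈ ℝ^d with |s − t|_∞ ≤ 2^{−j−2}, if u is chosen uniformly at random from [0,1)^d and D_{j,u} denotes the lattice of cubes {2^{−j}([u, u+1)^d + ℓ) : ℓ ∈ ℤ^d}, then the probability that s and t lie in a common cube of D_{j,u} is at least (3/4)^d. -/
open MeasureTheory

lemma coord_mem (a b : ℝ) (hab : a ≤ b) (hd : b - a ≤ 1/4) (x : ℝ)
    (hx : x ∈ Set.Icc (0:ℝ) (Int.fract b - 1/4) ∪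
      Set.Ioo (Int.fract b) (min (Int.fract b + 3/4) 1)) :
    (0 ≤ x ∧ x < 1) ∧ ∃ ℓ : ℤ, x + ℓ ≤ a ∧ b < x + ℓ + 1 := by
  have hr0 : 0 ≤ Int.fract b := Int.fract_nonneg b
  have hr1 : Int.fract b < 1 := Int.fract_lt_one b
  have hfl : (⌊b⌋ : ℝ) = b - Int.fract b := (Int.self_sub_fract b).symm
  rcases hx with ⟨hx0, hx1⟩ | ⟨hx0, hx1⟩
  · refine ⟨⟨hx0, by linarith⟩, ⌊b⌋, ?_, ?_⟩
    · push_cast [hfl]; linarith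
    · push_cast [hfl]; linarith
  · rw [lt_min_iff] at hx1
    obtain ⟨hx1, hx2⟩ := hx1
    refine ⟨⟨by linarith, hx2⟩, ⌊b⌋ - 1, ?_, ?_⟩
    · push_cast [hfl]; linarith
    · push_cast [hfl]; linarith

lemma coord_vol (r : ℝ) (h0 : 0 ≤ r) (h1 : r < 1) :
    ENNReal.ofReal (3/4) ≤
      volume (Set.Icc (0:ℝ) (r - 1/4) ∪ Set.Ioo r (min (r + 3/4) 1)) := by
  rcases le_or_gt (1/4) r with hc | hc
  · have hmin : min (r + 3/4) 1 = 1 := min_eq_right (by linarith)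
    have hdisj : Disjoint (Set.Icc (0:ℝ) (r - 1/4)) (Set.Ioo r (min (r + 3/4) 1)) := by
      rw [Set.disjoint_left]
      intro x hx hx2
      exact absurd hx2.1 (not_lt.2 (by linarith [hx.2]))
    rw [measure_union hdisj measurableSet_Ioo, hmin, Real.volume_Icc, Real.volume_Ioo,
      ← ENNReal.ofReal_add (by linarith) (by linarith)]
    apply ENNReal.ofReal_le_ofReal; linarith
  · have hmin : min (r + 3/4) 1 = r + 3/4 := min_eq_left (by linarith)
    refine le_trans ?_ (measure_mono Set.subset_union_right)
    rw [hmin, Real.volume_Ioo]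
    apply ENNReal.ofReal_le_ofReal; linarith

/-- For `j ∈ ℤ` and `s, t ∈ ℝ^d` with `|s - t|_∞ ≤ 2^{-j-2}`, the probability (with respect to
Lebesgue measure on `[0,1)^d`) that `s` and `t` lie in a common cube of the shifted grid
`D_{j,u} = {2^{-j}([u, u+1)^d + ℓ) : ℓ ∈ ℤ^d}` is at least `(3/4)^d`. -/
theorem stmt3 (d : ℕ) (j : ℤ) (s t : Fin d → ℝ)
    (h : ∀ i, |s i - t i| ≤ (2 : ℝ) ^ (-j - 2)) :
    ENNReal.ofReal ((3 / 4 : ℝ) ^ d) ≤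
      volume {u : Fin d → ℝ |
        u ∈ Set.univ.pi (fun _ : Fin d => Set.Ico (0 : ℝ) 1) ∧
        ∃ ℓ : Fin d → ℤ, ∀ i,
          ((2 : ℝ) ^ (-j) * (u i + ℓ i) ≤ s i ∧
            s i < (2 : ℝ) ^ (-j) * (u i + ℓ i) + (2 : ℝ) ^ (-j)) ∧
          ((2 : ℝ) ^ (-j) * (u i + ℓ i) ≤ t i ∧
            t i < (2 : ℝ) ^ (-j) * (u i + ℓ i) + (2 : ℝ) ^ (-j))} := by
  classical
  have hp : (0:ℝ) < (2:ℝ) ^ j := zpow_pos two_pos j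
  set p : ℝ := (2:ℝ) ^ j with hpdef
  set r : Fin d → ℝ := fun i => Int.fract (p * max (s i) (t i)) with hrdef
  set G : Fin d → Set ℝ := fun i =>
    Set.Icc (0:ℝ) (r i - 1/4) ∪ Set.Ioo (r i) (min (r i + 3/4) 1) with hGdef
  have hinv : (2:ℝ) ^ (-j) = p⁻¹ := by rw [hpdef, zpow_neg]
  have hsub : Set.univ.pi G ⊆ {u : Fin d → ℝ |
      u ∈ Set.univ.pi (fun _ : Fin d => Set.Ico (0 : ℝ) 1) ∧
      ∃ ℓ : Fin d → ℤ, ∀ i,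
        ((2 : ℝ) ^ (-j) * (u i + ℓ i) ≤ s i ∧
          s i < (2 : ℝ) ^ (-j) * (u i + ℓ i) + (2 : ℝ) ^ (-j)) ∧
        ((2 : ℝ) ^ (-j) * (u i + ℓ i) ≤ t i ∧
          t i < (2 : ℝ) ^ (-j) * (u i + ℓ i) + (2 : ℝ) ^ (-j))} := by
    intro u hu
    have hmem : ∀ i, (0 ≤ u i ∧ u i < 1) ∧ ∃ ℓ : ℤ,
        u i + ℓ ≤ p * min (s i) (t i) ∧ p * max (s i) (t i) < u i + ℓ + 1 := by
      intro i
      apply coord_mem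
      · exact mul_le_mul_of_nonneg_left (min_le_max) hp.le
      · have habs : max (s i) (t i) - min (s i) (t i) = |s i - t i| :=
          by rw [max_sub_min_eq_abs, abs_sub_comm]
        have h2 : p * ((2:ℝ) ^ (-j - 2)) = 1/4 := by
          rw [hpdef, ← zpow_add₀ (two_ne_zero), show j + (-j - 2) = -2 by ring]
          norm_num
        have := h i
        calc p * max (s i) (t i) - p * min (s i) (t i)
            = p * |s i - t i| := by rw [← habs]; ring
          _ ≤ p * ((2:ℝ) ^ (-j - 2)) := by
              exact mul_le_mul_of_nonneg_left this hp.le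
          _ = 1/4 := h2
      · exact hu i (Set.mem_univ i)
    refine ⟨fun i _ => ⟨(hmem i).1.1, (hmem i).1.2⟩,
      fun i => Classical.choose (hmem i).2, fun i => ?_⟩
    obtain ⟨k1, k2⟩ := Classical.choose_spec (hmem i).2
    set ℓ : ℤ := Classical.choose (hmem i).2
    have hin : (0:ℝ) < p⁻¹ := inv_pos.2 hp
    have e1 : p⁻¹ * (p * min (s i) (t i)) = min (s i) (t i) :=
      inv_mul_cancel_left₀ hp.ne' _
    have e2 : p⁻¹ * (p * max (s i) (t i)) = max (s i) (t i) :=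
      inv_mul_cancel_left₀ hp.ne' _
    have m1 : p⁻¹ * (u i + ℓ) ≤ min (s i) (t i) := by
      calc p⁻¹ * (u i + ℓ) ≤ p⁻¹ * (p * min (s i) (t i)) :=
            mul_le_mul_of_nonneg_left k1 hin.le
        _ = _ := e1
    have m2 : max (s i) (t i) < p⁻¹ * (u i + ℓ) + p⁻¹ := by
      have := mul_lt_mul_of_pos_left k2 hin
      rw [e2] at this
      calc max (s i) (t i) < p⁻¹ * (u i + ℓ + 1) := this
        _ = p⁻¹ * (u i + ℓ) + p⁻¹ := by ring
    have hs1 : min (s i) (t i) ≤ s i := min_le_left _ _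
    have hs2 : s i ≤ max (s i) (t i) := le_max_left _ _
    have ht1 : min (s i) (t i) ≤ t i := min_le_right _ _
    have ht2 : t i ≤ max (s i) (t i) := le_max_right _ _
    rw [hinv]
    exact ⟨⟨le_trans m1 hs1, lt_of_le_of_lt hs2 m2⟩,
      ⟨le_trans m1 ht1, lt_of_le_of_lt ht2 m2⟩⟩
  refine le_trans ?_ (measure_mono hsub)
  rw [volume_pi_pi]
  have hvol : ∀ i, ENNReal.ofReal (3/4) ≤ volume (G i) := fun i =>
    coord_vol (r i) (Int.fract_nonneg _) (Int.fract_lt_one _)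
  calc ENNReal.ofReal ((3 / 4 : ℝ) ^ d)
      = ENNReal.ofReal (3/4) ^ d := ENNReal.ofReal_pow (by norm_num) d
    _ = ∏ _i : Fin d, ENNReal.ofReal (3/4) := by
        rw [Finset.prod_const, Finset.card_fin]
    _ ≤ ∏ i, volume (G i) := Finset.prod_le_prod' fun i _ => hvol i
end

section
/- Let W be a matrix A_p weight on ℝ^d (1 < p < ∞) with reducing operators V_I, and let B be a locally integrable M_n(ℂ)-valued function. If for every dyadic cube J one has sup_J (1/|J|)∑_{ε}∑_{I ∈ D(J)} ‖V_I B_I^ε V_I^{−1}‖² ≤ C₁ and sup_J (1/|J|)∑_{ε}∑_{I ∈ D(J)} ‖V_I (B_I^ε)* V_I^{−1}‖² ≤ C₂ (i.e., B, B* ∈ BMO_W^p with dyadic norms C₁^{1/2}, C₂^{1/2}), then B ∈ BMO dyadically: sup_J (1/|J|)∑_{ε}∑_{I ∈ D(J)} ‖B_I^ε‖² ≤ C(n)·C₁^{1/2} C₂^{1/2}, using tr((B_I^ε)* B_I^ε) = tr((V_I (B_I^ε)* V_I^{−1})(V_I B_I^ε V_I^{−1})). -/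
/-!
The operator norm is dominated by the Frobenius norm, `‖B‖² ≤ tr(B*B)`, the trace is invariant
under the similarity `X ↦ V X V⁻¹`, and `|tr M| ≤ n ‖M‖` for `n × n` matrices, so
`‖B‖² ≤ tr((V B* V⁻¹)(V B V⁻¹)) ≤ n ‖V B* V⁻¹‖ ‖V B V⁻¹‖`.
Summing over a Carleson family and applying Cauchy–Schwarz turns the two weighted Carleson
bounds `C₂|J|` and `C₁|J|` into the unweighted one `n √(C₁ C₂) |J|`.
-/

open MeasureTheory Matrix

noncomputable def opN {n : ℕ} (A : Matrix (Fin n) (Fin n) ℂ) : ℝ :=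
  ‖Matrix.toEuclideanCLM (𝕜 := ℂ) A‖

/-- The dyadic cube of generation `I.1` and position `I.2` in `ℝ^d`. -/
def dcube {d : ℕ} (I : ℤ × (Fin d → ℤ)) : Set (Fin d → ℝ) :=
  {x | ∀ i, (2 : ℝ) ^ (-I.1) * I.2 i ≤ x i ∧ x i < (2 : ℝ) ^ (-I.1) * (I.2 i + 1)}

namespace Matrix

theorem trace_conj_mul_conj {n R : Type*} [Fintype n] [DecidableEq n] [CommRing R]
    (X Y V : Matrix n n R) (hV : IsUnit V) :
    ((V * X * V⁻¹) * (V * Y * V⁻¹)).trace = (X * Y).trace := by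
  have hdet : IsUnit V.det := (isUnit_iff_isUnit_det V).mp hV
  rw [Matrix.mul_assoc, Matrix.mul_assoc V Y, nonsing_inv_mul_cancel_left _ _ hdet,
    Matrix.mul_assoc, trace_mul_comm]
  simp only [Matrix.mul_assoc, nonsing_inv_mul _ hdet, Matrix.mul_one]

theorem re_trace_conjTranspose_mul_self {𝕜 m n : Type*} [RCLike 𝕜] [Fintype m] [Fintype n]
    (B : Matrix m n 𝕜) : RCLike.re (Bᴴ * B).trace = ∑ i, ∑ j, ‖B i j‖ ^ 2 := by
  simp only [trace, diag, mul_apply, conjTranspose_apply, map_sum, RCLike.star_def,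
    RCLike.conj_mul]
  rw [Finset.sum_comm]
  norm_cast

open scoped Matrix.Norms.L2Operator

variable {𝕜 : Type*} [RCLike 𝕜] {m n : Type*} [Fintype m] [Fintype n] [DecidableEq n]

theorem l2_opNorm_le_sqrt_sum_norm_sq (B : Matrix m n 𝕜) :
    ‖B‖ ≤ √(∑ i, ∑ j, ‖B i j‖ ^ 2) := by
  refine ContinuousLinearMap.opNorm_le_bound _ (Real.sqrt_nonneg _) fun x => ?_
  have hrow : ∀ i, ‖∑ j, B i j * x j‖ ^ 2 ≤ (∑ j, ‖B i j‖ ^ 2) * ∑ j, ‖x j‖ ^ 2 := fun i =>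
    calc ‖∑ j, B i j * x j‖ ^ 2 ≤ (∑ j, ‖B i j‖ * ‖x j‖) ^ 2 := by
          gcongr
          exact (norm_sum_le _ _).trans_eq (by simp)
      _ ≤ _ := Finset.sum_mul_sq_le_sq_mul_sq _ _ _
  change ‖WithLp.toLp 2 (B *ᵥ x.ofLp)‖ ≤ _
  rw [EuclideanSpace.norm_eq, EuclideanSpace.norm_eq, ← Real.sqrt_mul (by positivity),
    Finset.sum_mul]
  exact Real.sqrt_le_sqrt (Finset.sum_le_sum fun i _ => hrow i)

theorem l2_opNorm_sq_le_re_trace_conjTranspose_mul_self (B : Matrix m n 𝕜) :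
    ‖B‖ ^ 2 ≤ RCLike.re (Bᴴ * B).trace := by
  rw [re_trace_conjTranspose_mul_self, ← Real.sqrt_le_sqrt_iff (by positivity),
    Real.sqrt_sq (norm_nonneg _)]
  exact l2_opNorm_le_sqrt_sum_norm_sq B

theorem norm_apply_le_l2_opNorm (M : Matrix m n 𝕜) (i : m) (j : n) :
    ‖M i j‖ ≤ ‖M‖ :=
  calc ‖M i j‖ = ‖(EuclideanSpace.equiv m 𝕜).symm (M *ᵥ EuclideanSpace.single j 1) i‖ := by
        simp [mulVec_single]
    _ ≤ ‖(EuclideanSpace.equiv m 𝕜).symm (M *ᵥ EuclideanSpace.single j 1)‖ :=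
        PiLp.norm_apply_le _ _
    _ ≤ ‖M‖ * ‖EuclideanSpace.single j (1 : 𝕜)‖ := l2_opNorm_mulVec _ _
    _ = ‖M‖ := by simp

theorem norm_trace_le_card_mul_l2_opNorm (M : Matrix n n 𝕜) :
    ‖M.trace‖ ≤ Fintype.card n * ‖M‖ :=
  calc ‖M.trace‖ ≤ ∑ i, ‖M i i‖ := norm_sum_le _ _
    _ ≤ ∑ _i : n, ‖M‖ := Finset.sum_le_sum fun i _ => norm_apply_le_l2_opNorm M i i
    _ = Fintype.card n * ‖M‖ := by simp

theorem l2_opNorm_sq_le_card_mul_conj (B V : Matrix n n 𝕜) (hV : IsUnit V) :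
    ‖B‖ ^ 2 ≤ Fintype.card n * (‖V * Bᴴ * V⁻¹‖ * ‖V * B * V⁻¹‖) :=
  calc ‖B‖ ^ 2 ≤ RCLike.re (Bᴴ * B).trace := l2_opNorm_sq_le_re_trace_conjTranspose_mul_self B
    _ = RCLike.re ((V * Bᴴ * V⁻¹) * (V * B * V⁻¹)).trace := by rw [trace_conj_mul_conj _ _ _ hV]
    _ ≤ ‖((V * Bᴴ * V⁻¹) * (V * B * V⁻¹)).trace‖ := RCLike.re_le_norm _
    _ ≤ Fintype.card n * ‖(V * Bᴴ * V⁻¹) * (V * B * V⁻¹)‖ := norm_trace_le_card_mul_l2_opNorm _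
    _ ≤ Fintype.card n * (‖V * Bᴴ * V⁻¹‖ * ‖V * B * V⁻¹‖) := by gcongr; exact l2_opNorm_mul _ _

end Matrix

open scoped Matrix.Norms.L2Operator

theorem opN_eq_l2_opNorm {n : ℕ} (A : Matrix (Fin n) (Fin n) ℂ) : opN A = ‖A‖ := rfl

theorem stmt7_general (n d : ℕ) (C₁ C₂ : ℝ)
    (Sig : Type)
    (Bc : (ℤ × (Fin d → ℤ)) → Sig → Matrix (Fin n) (Fin n) ℂ)
    (V : (ℤ × (Fin d → ℤ)) → Matrix (Fin n) (Fin n) ℂ)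
    (hV : ∀ I, IsUnit (V I))
    (h1 : ∀ (J : ℤ × (Fin d → ℤ)) (s : Finset ((ℤ × (Fin d → ℤ)) × Sig)),
      (∀ i ∈ s, dcube i.1 ⊆ dcube J) →
      ∑ i ∈ s, opN (V i.1 * Bc i.1 i.2 * (V i.1)⁻¹) ^ 2 ≤ C₁ * (volume (dcube J)).toReal)
    (h2 : ∀ (J : ℤ × (Fin d → ℤ)) (s : Finset ((ℤ × (Fin d → ℤ)) × Sig)),
      (∀ i ∈ s, dcube i.1 ⊆ dcube J) →
      ∑ i ∈ s, opN (V i.1 * (Bc i.1 i.2)ᴴ * (V i.1)⁻¹) ^ 2 ≤ C₂ * (volume (dcube J)).toReal) :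
    ∃ C : ℝ, 0 < C ∧ ∀ (J : ℤ × (Fin d → ℤ)) (s : Finset ((ℤ × (Fin d → ℤ)) × Sig)),
      (∀ i ∈ s, dcube i.1 ⊆ dcube J) →
      ∑ i ∈ s, opN (Bc i.1 i.2) ^ 2 ≤
        C * C₁ ^ (1 / 2 : ℝ) * C₂ ^ (1 / 2 : ℝ) * (volume (dcube J)).toReal := by
  refine ⟨n + 1, by positivity, fun J s hs => ?_⟩
  set vol := (volume (dcube J)).toReal
  set a := fun i : (ℤ × (Fin d → ℤ)) × Sig => opN (V i.1 * (Bc i.1 i.2)ᴴ * (V i.1)⁻¹)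
  set b := fun i : (ℤ × (Fin d → ℤ)) × Sig => opN (V i.1 * Bc i.1 i.2 * (V i.1)⁻¹)
  have hpointwise : ∀ i ∈ s, opN (Bc i.1 i.2) ^ 2 ≤ n * (a i * b i) := fun i _ => by
    simpa only [a, b, opN_eq_l2_opNorm, Fintype.card_fin] using
      Matrix.l2_opNorm_sq_le_card_mul_conj (Bc i.1 i.2) (V i.1) (hV i.1)
  have hCS : ∑ i ∈ s, a i * b i ≤ √(C₂ * vol) * √(C₁ * vol) :=
    (Real.sum_mul_le_sqrt_mul_sqrt s a b).trans (by gcongr; exacts [h2 J s hs, h1 J s hs])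
  have hsqrt : √(C₂ * vol) * √(C₁ * vol) = C₁ ^ (1 / 2 : ℝ) * C₂ ^ (1 / 2 : ℝ) * vol := by
    rw [Real.sqrt_mul' _ ENNReal.toReal_nonneg, Real.sqrt_mul' _ ENNReal.toReal_nonneg,
      ← Real.sqrt_eq_rpow, ← Real.sqrt_eq_rpow, mul_mul_mul_comm,
      Real.mul_self_sqrt ENNReal.toReal_nonneg, mul_comm √C₂]
  have hab : 0 ≤ ∑ i ∈ s, a i * b i :=
    Finset.sum_nonneg fun i _ => mul_nonneg (norm_nonneg _) (norm_nonneg _)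
  calc ∑ i ∈ s, opN (Bc i.1 i.2) ^ 2
      ≤ n * ∑ i ∈ s, a i * b i := (Finset.sum_le_sum hpointwise).trans_eq (Finset.mul_sum ..).symm
    _ ≤ (n + 1) * (√(C₂ * vol) * √(C₁ * vol)) := by gcongr; linarith
    _ = (n + 1) * C₁ ^ (1 / 2 : ℝ) * C₂ ^ (1 / 2 : ℝ) * vol := by rw [hsqrt]; ring

/-- If `B, B* ∈ BMO_W^p` dyadically (i.e. for every dyadic cube `J` the Carleson sums of
`‖V_I B_I^ε V_I^{-1}‖²` and `‖V_I (B_I^ε)* V_I^{-1}‖²` over dyadic subcubes `I ⊆ J` are at most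
`C₁|J|` and `C₂|J|` respectively), then `B ∈ BMO` dyadically:
`(1/|J|) ∑_ε ∑_{I ∈ D(J)} ‖B_I^ε‖² ≤ C(n)·C₁^{1/2} C₂^{1/2}`.  Here the Haar coefficients
`B_I^ε` and reducing operators `V_I` are given as data indexed by dyadic cubes and Haar
signatures. -/
theorem stmt7 (n d : ℕ) (C₁ C₂ : ℝ) (hC₁ : 0 ≤ C₁) (hC₂ : 0 ≤ C₂)
    (Sig : Type) [Fintype Sig]
    (Bc : (ℤ × (Fin d → ℤ)) → Sig → Matrix (Fin n) (Fin n) ℂ)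
    (V : (ℤ × (Fin d → ℤ)) → Matrix (Fin n) (Fin n) ℂ)
    (hV : ∀ I, IsUnit (V I))
    (h1 : ∀ (J : ℤ × (Fin d → ℤ)) (s : Finset ((ℤ × (Fin d → ℤ)) × Sig)),
      (∀ i ∈ s, dcube i.1 ⊆ dcube J) →
      ∑ i ∈ s, opN (V i.1 * Bc i.1 i.2 * (V i.1)⁻¹) ^ 2 ≤ C₁ * (volume (dcube J)).toReal)
    (h2 : ∀ (J : ℤ × (Fin d → ℤ)) (s : Finset ((ℤ × (Fin d → ℤ)) × Sig)),
      (∀ i ∈ s, dcube i.1 ⊆ dcube J) →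
      ∑ i ∈ s, opN (V i.1 * (Bc i.1 i.2)ᴴ * (V i.1)⁻¹) ^ 2 ≤ C₂ * (volume (dcube J)).toReal) :
    ∃ C : ℝ, 0 < C ∧ ∀ (J : ℤ × (Fin d → ℤ)) (s : Finset ((ℤ × (Fin d → ℤ)) × Sig)),
      (∀ i ∈ s, dcube i.1 ⊆ dcube J) →
      ∑ i ∈ s, opN (Bc i.1 i.2) ^ 2 ≤
        C * C₁ ^ (1 / 2 : ℝ) * C₂ ^ (1 / 2 : ℝ) * (volume (dcube J)).toReal :=
  stmt7_general n d C₁ C₂ Sig Bc V hV h1 h2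
end

section
/- Let W be a matrix A_p weight on ℝ with 1 < p ≤ 2, and for each interval I let V_I be a reducing operator, i.e., |I|^{−1/p}‖1_I W^{1/p} e‖_{L^p} ≈ |V_I e| for all e ∈ ℂ^n. Define w_I(t) = ‖V_I^{−1} W^{1/p}(t)‖. Then W satisfies the B_{2,p} condition: sup_I |I| ∫_{ℝ \ I} w_I(t)/|t − c_I|² dt < ∞, where c_I is the center of I. -/
/-!
Fix `I = [a, b]` and put `f_j = V_I⁻¹ e_j`. Since `W^{1/p}` and `V_I` are Hermitian,
`w_I(t) ≤ ∑ⱼ |W^{1/p}(t) f_j|`, and each `g = |W^{1/p} f_j|` satisfies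
`g(t) ≤ ‖W^{1/p}(t) W^{-1/p}(s)‖ g(s)`. Hölder's inequality `|I| ≤ ‖g‖_{L^p(I)} ‖g⁻¹‖_{L^q(I)}`
together with the reducing-operator bound `‖g‖_{L^p(I)} ≲ |I|^{1/p}` gives
`|I|^{1/q} ≲ ‖g⁻¹‖_{L^q(I)}`, so for `t ∈ J ⊇ I` we get
`g(t) |I|^{1/q} ≲ (∫_J ‖W^{1/p}(t) W^{-1/p}(s)‖^q ds)^{1/q}`; integrating over `J` and using the
matrix `A_p` condition on `J` yields `∫_J g ≲ |J| (|J| / |I|)^{1/q}`. Applied to the dilates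
`2^k I`, the tail integral becomes a geometric series with ratio `2^{1/q - 1} < 1`.
-/

open MeasureTheory
open scoped ComplexOrder

noncomputable def eN {n : ℕ} (v : Fin n → ℂ) : ℝ :=
  Real.sqrt (∑ i, ‖v i‖ ^ 2)

open scoped ENNReal Matrix

section ReverseHolder

variable {α : Type*} [MeasurableSpace α] {μ : Measure α} {p q : ℝ}

theorem lintegral_rpow_one_div_le (hpq : p.HolderConjugate q) (F : α → ℝ≥0∞) :
    ∫⁻ x, F x ^ (1 / p) ∂μ ≤ (∫⁻ x, F x ∂μ) ^ (1 / p) * μ Set.univ ^ (1 / q) := by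
  -- `F` need not be measurable: pass to a measurable minorant with the same integral.
  obtain ⟨h, hh, hle, heq⟩ := exists_measurable_le_lintegral_eq μ fun x => F x ^ (1 / p)
  have hpow : ∀ x, h x ^ p ≤ F x := fun x => by
    calc h x ^ p ≤ (F x ^ (1 / p)) ^ p := ENNReal.rpow_le_rpow (hle x) hpq.nonneg
      _ = F x := by rw [← ENNReal.rpow_mul, one_div_mul_cancel hpq.ne_zero, ENNReal.rpow_one]
  have hholder := ENNReal.lintegral_mul_norm_pow_le (μ := μ) (hh.pow_const p).aemeasurable
    (aemeasurable_const (b := (1 : ℝ≥0∞))) (one_div_nonneg.2 hpq.nonneg)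
    (one_div_nonneg.2 hpq.symm.nonneg) (by simpa [one_div] using hpq.inv_add_inv_eq_one)
  simp only [ENNReal.one_rpow, mul_one, ← ENNReal.rpow_mul, mul_one_div_cancel hpq.ne_zero,
    ENNReal.rpow_one, lintegral_const, one_mul] at hholder
  rw [heq]
  exact hholder.trans
    (mul_le_mul' (ENNReal.rpow_le_rpow (lintegral_mono hpow) (one_div_nonneg.2 hpq.nonneg)) le_rfl)

theorem measure_univ_le_lintegral_rpow_mul_lintegral_inv_rpow (hpq : p.HolderConjugate q)
    {g : α → ℝ≥0∞} (hg : AEMeasurable g μ) (hg0 : ∀ᵐ x ∂μ, g x ≠ 0)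
    (hgtop : ∀ᵐ x ∂μ, g x ≠ ⊤) :
    μ Set.univ ≤ (∫⁻ x, g x ^ p ∂μ) ^ (1 / p) * (∫⁻ x, (g x)⁻¹ ^ q ∂μ) ^ (1 / q) := by
  have hone : ∫⁻ x, (g * g⁻¹) x ∂μ = μ Set.univ := by
    rw [← lintegral_one]
    refine lintegral_congr_ae ?_
    filter_upwards [hg0, hgtop] with x hx0 hxtop
    exact ENNReal.mul_inv_cancel hx0 hxtop
  rw [← hone]
  exact ENNReal.lintegral_mul_le_Lp_mul_Lq μ hpq hg hg.inv

theorem rpow_mul_lintegral_inv_rpow_le {q : ℝ} (hq : 0 ≤ q) {a : ℝ≥0∞} {g K : α → ℝ≥0∞}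
    (hK : ∀ᵐ s ∂μ, a ≤ K s * g s) :
    a ^ q * ∫⁻ s, (g s)⁻¹ ^ q ∂μ ≤ ∫⁻ s, K s ^ q ∂μ := by
  refine (lintegral_const_mul_le _ _).trans (lintegral_mono_ae ?_)
  filter_upwards [hK] with s hs
  rw [← ENNReal.mul_rpow_of_nonneg _ _ hq, ← div_eq_mul_inv]
  exact ENNReal.rpow_le_rpow (ENNReal.div_le_of_le_mul hs) hq

theorem rpow_measure_univ_le_mul_lintegral_inv_rpow (hpq : p.HolderConjugate q)
    (hμ0 : μ Set.univ ≠ 0) (hμtop : μ Set.univ ≠ ⊤) {g : α → ℝ≥0∞} (hg : AEMeasurable g μ)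
    (hg0 : ∀ᵐ x ∂μ, g x ≠ 0) (hgtop : ∀ᵐ x ∂μ, g x ≠ ⊤) {c : ℝ≥0∞}
    (hc : ((μ Set.univ)⁻¹ * ∫⁻ x, g x ^ p ∂μ) ^ (1 / p) ≤ c) :
    μ Set.univ ^ (1 / q) ≤ c * (∫⁻ x, (g x)⁻¹ ^ q ∂μ) ^ (1 / q) := by
  have hp : (0 : ℝ) ≤ 1 / p := one_div_nonneg.2 hpq.nonneg
  have hμp0 : μ Set.univ ^ (1 / p) ≠ 0 := by simp [hμ0, hμtop, hpq.pos]
  have hμptop : μ Set.univ ^ (1 / p) ≠ ⊤ := ENNReal.rpow_ne_top_of_nonneg hp hμtop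
  refine (ENNReal.mul_le_mul_iff_right hμp0 hμptop).1 ?_
  calc μ Set.univ ^ (1 / p) * μ Set.univ ^ (1 / q) = μ Set.univ := by
        rw [← ENNReal.rpow_add _ _ hμ0 hμtop,
          hpq.one_div_add_one_div, div_one, ENNReal.rpow_one]
    _ ≤ (∫⁻ x, g x ^ p ∂μ) ^ (1 / p) * (∫⁻ x, (g x)⁻¹ ^ q ∂μ) ^ (1 / q) :=
        measure_univ_le_lintegral_rpow_mul_lintegral_inv_rpow hpq hg hg0 hgtop
    _ = μ Set.univ ^ (1 / p) * ((μ Set.univ)⁻¹ * ∫⁻ x, g x ^ p ∂μ) ^ (1 / p) *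
          (∫⁻ x, (g x)⁻¹ ^ q ∂μ) ^ (1 / q) := by
        rw [← ENNReal.mul_rpow_of_nonneg _ _ hp, ← mul_assoc,
          ENNReal.mul_inv_cancel hμ0 hμtop, one_mul]
    _ ≤ μ Set.univ ^ (1 / p) * (c * (∫⁻ x, (g x)⁻¹ ^ q ∂μ) ^ (1 / q)) := by
        rw [mul_assoc]; gcongr

theorem lintegral_rpow_le_of_average_rpow_le (hpq : p.HolderConjugate q)
    (hμ0 : μ Set.univ ≠ 0) (hμtop : μ Set.univ ≠ ⊤) {A : α → ℝ≥0∞} {C : ℝ≥0∞}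
    (hA : (μ Set.univ)⁻¹ * ∫⁻ x, A x ^ (p / q) ∂μ ≤ C) :
    ∫⁻ x, A x ^ (1 / q) ∂μ ≤ μ Set.univ * C ^ (1 / p) := by
  have hp : (0 : ℝ) ≤ 1 / p := one_div_nonneg.2 hpq.nonneg
  have hexp : p / q * (1 / p) = 1 / q := by field_simp [hpq.ne_zero]
  have hint : ∫⁻ x, A x ^ (p / q) ∂μ ≤ μ Set.univ * C := by
    rw [← one_mul (∫⁻ x, A x ^ (p / q) ∂μ), ← ENNReal.mul_inv_cancel hμ0 hμtop, mul_assoc]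
    gcongr
  calc ∫⁻ x, A x ^ (1 / q) ∂μ = ∫⁻ x, (A x ^ (p / q)) ^ (1 / p) ∂μ := by
        simp_rw [← ENNReal.rpow_mul, hexp]
    _ ≤ (∫⁻ x, A x ^ (p / q) ∂μ) ^ (1 / p) * μ Set.univ ^ (1 / q) :=
        lintegral_rpow_one_div_le hpq _
    _ ≤ (μ Set.univ * C) ^ (1 / p) * μ Set.univ ^ (1 / q) := by gcongr
    _ = μ Set.univ * C ^ (1 / p) := by
        rw [ENNReal.mul_rpow_of_nonneg _ _ hp, mul_right_comm, ← ENNReal.rpow_add _ _ hμ0 hμtop,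
          hpq.one_div_add_one_div, div_one, ENNReal.rpow_one]

theorem setLIntegral_le_of_le_mul_kernel (hpq : p.HolderConjugate q) {I J : Set α}
    (hIJ : I ⊆ J) (hI0 : μ I ≠ 0) (hItop : μ I ≠ ⊤) (hJtop : μ J ≠ ⊤) {g : α → ℝ≥0∞}
    (hg : AEMeasurable g (μ.restrict I)) (hg0 : ∀ᵐ x ∂μ.restrict I, g x ≠ 0)
    (hgtop : ∀ᵐ x ∂μ.restrict I, g x ≠ ⊤) {K : α → α → ℝ≥0∞}
    (hK : ∀ t, ∀ᵐ s ∂μ.restrict I, g t ≤ K t s * g s) {c C : ℝ≥0∞} (hc : c ≠ ⊤)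
    (hg_avg : ((μ I)⁻¹ * ∫⁻ x in I, g x ^ p ∂μ) ^ (1 / p) ≤ c)
    (hK_avg : (μ J)⁻¹ * ∫⁻ x in J, ((μ J)⁻¹ * ∫⁻ s in J, K x s ^ q ∂μ) ^ (p / q) ∂μ ≤ C) :
    ∫⁻ t in J, g t ∂μ ≤ c * C ^ (1 / p) * μ J * (μ J / μ I) ^ (1 / q) := by
  have hq : (0 : ℝ) ≤ 1 / q := one_div_nonneg.2 hpq.symm.nonneg
  have hJ0 : μ J ≠ 0 := ne_bot_of_le_ne_bot hI0 (measure_mono hIJ)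
  set A : α → ℝ≥0∞ := fun t => (μ J)⁻¹ * ∫⁻ s in J, K t s ^ q ∂μ
  have hI : μ I ^ (1 / q) ≤ c * (∫⁻ s in I, (g s)⁻¹ ^ q ∂μ) ^ (1 / q) := by
    simpa using rpow_measure_univ_le_mul_lintegral_inv_rpow (μ := μ.restrict I) hpq
      (by simpa using hI0) (by simpa using hItop) hg hg0 hgtop (by simpa using hg_avg)
  have hpoint : ∀ t, g t * μ I ^ (1 / q) ≤ c * μ J ^ (1 / q) * A t ^ (1 / q) := fun t => by
    calc g t * μ I ^ (1 / q)
        ≤ g t * (c * (∫⁻ s in I, (g s)⁻¹ ^ q ∂μ) ^ (1 / q)) := by gcongr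
      _ = c * (g t ^ q * ∫⁻ s in I, (g s)⁻¹ ^ q ∂μ) ^ (1 / q) := by
        rw [ENNReal.mul_rpow_of_nonneg _ _ hq, ← ENNReal.rpow_mul,
          mul_one_div_cancel hpq.symm.ne_zero, ENNReal.rpow_one, mul_left_comm]
      _ ≤ c * (∫⁻ s in J, K t s ^ q ∂μ) ^ (1 / q) := by
        gcongr
        exact (rpow_mul_lintegral_inv_rpow_le hpq.symm.nonneg (hK t)).trans
          (lintegral_mono_set hIJ)
      _ = c * μ J ^ (1 / q) * A t ^ (1 / q) := by
        rw [mul_assoc, ← ENNReal.mul_rpow_of_nonneg _ _ hq, ← mul_assoc,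
          ENNReal.mul_inv_cancel hJ0 hJtop, one_mul]
  have hA : ∫⁻ t in J, A t ^ (1 / q) ∂μ ≤ μ J * C ^ (1 / p) := by
    simpa using lintegral_rpow_le_of_average_rpow_le (μ := μ.restrict J) hpq
      (by simpa using hJ0) (by simpa using hJtop) (by simpa using hK_avg)
  have hIq0 : μ I ^ (1 / q) ≠ 0 := by simp [hI0, hItop, hpq.symm.pos]
  have hIqtop : μ I ^ (1 / q) ≠ ⊤ := ENNReal.rpow_ne_top_of_nonneg hq hItop
  rw [ENNReal.div_rpow_of_nonneg _ _ hq, ← mul_div_assoc, ENNReal.le_div_iff_mul_le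
    (Or.inl hIq0) (Or.inl hIqtop), ← lintegral_mul_const' _ _ hIqtop]
  calc ∫⁻ t in J, g t * μ I ^ (1 / q) ∂μ
      ≤ ∫⁻ t in J, c * μ J ^ (1 / q) * A t ^ (1 / q) ∂μ := lintegral_mono hpoint
    _ = c * μ J ^ (1 / q) * ∫⁻ t in J, A t ^ (1 / q) ∂μ :=
        lintegral_const_mul' _ _ (ENNReal.mul_ne_top hc
          (ENNReal.rpow_ne_top_of_nonneg hq hJtop))
    _ ≤ c * μ J ^ (1 / q) * (μ J * C ^ (1 / p)) := by gcongr
    _ = c * C ^ (1 / p) * μ J * μ J ^ (1 / q) := by ring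

end ReverseHolder

theorem ContinuousLinearMap.opNorm_le_sum_norm_apply_orthonormalBasis {𝕜 E F ι : Type*}
    [RCLike 𝕜] [NormedAddCommGroup E] [InnerProductSpace 𝕜 E] [SeminormedAddCommGroup F]
    [NormedSpace 𝕜 F] [Fintype ι] (b : OrthonormalBasis ι 𝕜 E) (T : E →L[𝕜] F) :
    ‖T‖ ≤ ∑ i, ‖T (b i)‖ := by
  refine T.opNorm_le_bound (Finset.sum_nonneg fun i _ => norm_nonneg _) fun x => ?_
  have hcoord : ∀ i, ‖b.repr x i‖ ≤ ‖x‖ := fun i =>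
    (PiLp.norm_apply_le (b.repr x) i).trans_eq (b.repr.norm_map x)
  conv_lhs => rw [← b.sum_repr x]
  simp only [map_sum, map_smul, Finset.sum_mul]
  refine (norm_sum_le _ _).trans (Finset.sum_le_sum fun i _ => ?_)
  rw [norm_smul, mul_comm]
  gcongr
  exact hcoord i

section MatrixWeight

variable {n : ℕ}

theorem eN_nonneg (v : Fin n → ℂ) : 0 ≤ eN v := Real.sqrt_nonneg _

theorem opN_nonneg (A : Matrix (Fin n) (Fin n) ℂ) : 0 ≤ opN A := norm_nonneg _

theorem eN_eq_norm (v : Fin n → ℂ) : eN v = ‖WithLp.toLp 2 v‖ := by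
  rw [eN, EuclideanSpace.norm_eq]

theorem eN_mulVec_le (A : Matrix (Fin n) (Fin n) ℂ) (v : Fin n → ℂ) :
    eN (A *ᵥ v) ≤ opN A * eN v := by
  rw [eN_eq_norm, eN_eq_norm, ← Matrix.toEuclideanCLM_toLp]
  exact ContinuousLinearMap.le_opNorm _ _

theorem eN_single (j : Fin n) : eN (Pi.single j 1 : Fin n → ℂ) = 1 := by
  rw [eN_eq_norm, PiLp.toLp_single, PiLp.norm_single, norm_one]

theorem eN_pos {v : Fin n → ℂ} (hv : v ≠ 0) : 0 < eN v := by
  rw [eN_eq_norm]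
  exact norm_pos_iff.2 (by simpa using hv)

theorem opN_conjTranspose (A : Matrix (Fin n) (Fin n) ℂ) : opN Aᴴ = opN A := by
  rw [opN, opN, ← Matrix.star_eq_conjTranspose, map_star, ContinuousLinearMap.star_eq_adjoint,
    LinearIsometryEquiv.norm_map]

theorem opN_le_sum_eN_mulVec_single (A : Matrix (Fin n) (Fin n) ℂ) :
    opN A ≤ ∑ j, eN (A *ᵥ Pi.single j 1) := by
  refine (ContinuousLinearMap.opNorm_le_sum_norm_apply_orthonormalBasis
    (EuclideanSpace.basisFun (Fin n) ℂ) _).trans_eq (Finset.sum_congr rfl fun j _ => ?_)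
  rw [EuclideanSpace.basisFun_apply, EuclideanSpace.single, ← PiLp.toLp_single,
    Matrix.toEuclideanCLM_toLp, eN_eq_norm]

theorem measurable_eN_mulVec {X : Type*} [MeasurableSpace X] {W : X → Matrix (Fin n) (Fin n) ℂ}
    (hW : ∀ i j, Measurable fun x => W x i j) (v : Fin n → ℂ) :
    Measurable fun x => eN (W x *ᵥ v) := by
  simp only [eN, Matrix.mulVec, dotProduct]
  fun_prop

theorem eN_mulVec_le_opN_mul_inv_mul_eN {A B : Matrix (Fin n) (Fin n) ℂ} (hB : IsUnit B)
    (v : Fin n → ℂ) : eN (A *ᵥ v) ≤ opN (A * B⁻¹) * eN (B *ᵥ v) := by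
  have hv : A *ᵥ v = (A * B⁻¹) *ᵥ (B *ᵥ v) := by
    rw [Matrix.mulVec_mulVec, mul_assoc,
      Matrix.nonsing_inv_mul _ ((Matrix.isUnit_iff_isUnit_det B).1 hB), mul_one]
  rw [hv]
  exact eN_mulVec_le _ _

theorem opN_inv_mul_le_sum_eN {V W : Matrix (Fin n) (Fin n) ℂ} (hV : V.IsHermitian)
    (hW : W.IsHermitian) : opN (V⁻¹ * W) ≤ ∑ j, eN (W *ᵥ (V⁻¹ *ᵥ Pi.single j 1)) := by
  rw [← opN_conjTranspose, Matrix.conjTranspose_mul, hW.eq, hV.inv.eq]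
  simpa only [Matrix.mulVec_mulVec] using opN_le_sum_eN_mulVec_single (W * V⁻¹)

theorem setLIntegral_eN_mulVec_le {X : Type*} [MeasurableSpace X] {μ : Measure X} {p q : ℝ}
    (hpq : p.HolderConjugate q) {W : X → Matrix (Fin n) (Fin n) ℂ}
    (hW : ∀ i j, Measurable fun x => W x i j) (hWpos : ∀ᵐ x ∂μ, (W x).PosDef) {I J : Set X}
    (hIJ : I ⊆ J) (hI0 : μ I ≠ 0) (hItop : μ I ≠ ⊤) (hJtop : μ J ≠ ⊤) {v : Fin n → ℂ}
    (hv : v ≠ 0) {c C : ℝ}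
    (hv_avg : ((μ I)⁻¹ * ∫⁻ x in I, ENNReal.ofReal (eN (W x *ᵥ v) ^ p) ∂μ) ^ (1 / p) ≤
      ENNReal.ofReal c)
    (hAp : (μ J)⁻¹ * ∫⁻ x in J,
        ((μ J)⁻¹ * ∫⁻ s in J, ENNReal.ofReal (opN (W x * (W s)⁻¹) ^ q) ∂μ) ^ (p / q) ∂μ ≤
      ENNReal.ofReal C) :
    ∫⁻ t in J, ENNReal.ofReal (eN (W t *ᵥ v)) ∂μ ≤
      ENNReal.ofReal c * ENNReal.ofReal C ^ (1 / p) * μ J * (μ J / μ I) ^ (1 / q) := by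
  refine setLIntegral_le_of_le_mul_kernel (K := fun t s => ENNReal.ofReal (opN (W t * (W s)⁻¹)))
    hpq hIJ hI0 hItop hJtop (measurable_eN_mulVec hW v).ennreal_ofReal.aemeasurable ?_
    (ae_of_all _ fun _ => ENNReal.ofReal_ne_top) (fun t => ae_restrict_of_ae ?_)
    ENNReal.ofReal_ne_top ?_ ?_
  · refine ae_restrict_of_ae (hWpos.mono fun x hx => (ENNReal.ofReal_pos.2 (eN_pos ?_)).ne')
    exact (Matrix.mulVec_injective_iff_isUnit.2 hx.isUnit).ne hv |>.trans_eq (Matrix.mulVec_zero _)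
  · refine hWpos.mono fun s hs => ?_
    rw [← ENNReal.ofReal_mul (opN_nonneg _)]
    exact ENNReal.ofReal_le_ofReal (eN_mulVec_le_opN_mul_inv_mul_eN hs.isUnit v)
  · simpa only [ENNReal.ofReal_rpow_of_nonneg (eN_nonneg _) hpq.nonneg] using hv_avg
  · simpa only [ENNReal.ofReal_rpow_of_nonneg (opN_nonneg _) hpq.symm.nonneg] using hAp

theorem setLIntegral_sum_eN_mulVec_inv_le {X : Type*} [MeasurableSpace X] {μ : Measure X}
    {p q : ℝ} (hpq : p.HolderConjugate q) {W : X → Matrix (Fin n) (Fin n) ℂ}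
    (hW : ∀ i j, Measurable fun x => W x i j) (hWpos : ∀ᵐ x ∂μ, (W x).PosDef)
    {V : Matrix (Fin n) (Fin n) ℂ} (hV : V.PosDef) {I J : Set X} (hIJ : I ⊆ J) (hI0 : μ I ≠ 0)
    (hItop : μ I ≠ ⊤) (hJtop : μ J ≠ ⊤) {c C : ℝ}
    (hred : ∀ e : Fin n → ℂ,
      ((μ I)⁻¹ * ∫⁻ x in I, ENNReal.ofReal (eN (W x *ᵥ e) ^ p) ∂μ) ^ (1 / p) ≤
        ENNReal.ofReal (c * eN (V *ᵥ e)))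
    (hAp : (μ J)⁻¹ * ∫⁻ x in J,
        ((μ J)⁻¹ * ∫⁻ s in J, ENNReal.ofReal (opN (W x * (W s)⁻¹) ^ q) ∂μ) ^ (p / q) ∂μ ≤
      ENNReal.ofReal C) :
    ∫⁻ t in J, ENNReal.ofReal (∑ j, eN (W t *ᵥ (V⁻¹ *ᵥ Pi.single j 1))) ∂μ ≤
      n * (ENNReal.ofReal c * ENNReal.ofReal C ^ (1 / p) * μ J * (μ J / μ I) ^ (1 / q)) := by
  have hVinv : ∀ j, V *ᵥ (V⁻¹ *ᵥ Pi.single j 1) = Pi.single j 1 := fun j => by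
    rw [Matrix.mulVec_mulVec, Matrix.mul_nonsing_inv _ ((Matrix.isUnit_iff_isUnit_det _).1
      hV.isUnit), Matrix.one_mulVec]
  have hcol : ∀ j, ∫⁻ t in J, ENNReal.ofReal (eN (W t *ᵥ (V⁻¹ *ᵥ Pi.single j 1))) ∂μ ≤
      ENNReal.ofReal c * ENNReal.ofReal C ^ (1 / p) * μ J * (μ J / μ I) ^ (1 / q) := fun j => by
    refine setLIntegral_eN_mulVec_le hpq hW hWpos hIJ hI0 hItop hJtop ?_ ?_ hAp
    · intro h0
      simpa [h0] using congrFun (hVinv j) j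
    · simpa only [hVinv, eN_single, mul_one] using hred (V⁻¹ *ᵥ Pi.single j 1)
  simp_rw [ENNReal.ofReal_sum_of_nonneg fun j _ => eN_nonneg _]
  rw [lintegral_finsetSum _ fun j _ => (measurable_eN_mulVec hW _).ennreal_ofReal]
  simpa using Finset.sum_le_card_nsmul Finset.univ _ _ fun j _ => hcol j

end MatrixWeight

section DyadicTail

open Set

theorem exists_pow_two_mul_le_of_half_lt {ℓ x : ℝ} (hℓ : 0 < ℓ) (hx : ℓ / 2 < |x|) :
    ∃ k : ℕ, |x| ≤ 2 ^ k * ℓ ∧ 4 ^ k * ℓ ^ 2 ≤ 4 * x ^ 2 := by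
  obtain ⟨k, hk, hk'⟩ := exists_nat_pow_near (x := 2 * |x| / ℓ) (y := 2)
    (by rw [le_div_iff₀ hℓ]; linarith) one_lt_two
  rw [le_div_iff₀ hℓ] at hk
  rw [div_lt_iff₀ hℓ, pow_succ] at hk'
  refine ⟨k, by nlinarith, ?_⟩
  calc 4 ^ k * ℓ ^ 2 = (2 ^ k * ℓ) ^ 2 := by rw [mul_pow, ← pow_mul, mul_comm k, pow_mul]; norm_num
    _ ≤ (2 * |x|) ^ 2 := by gcongr
    _ = 4 * x ^ 2 := by rw [mul_pow, sq_abs]; norm_num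

theorem ofReal_div_sq_le_tsum_indicator {w : ℝ → ℝ} (hw : ∀ t, 0 ≤ w t) {a b t : ℝ}
    (hab : a < b) (ht : t ∉ Icc a b) :
    ENNReal.ofReal (w t / (t - (a + b) / 2) ^ 2) ≤
      ∑' k : ℕ, (Icc ((a + b) / 2 - 2 ^ k * (b - a)) ((a + b) / 2 + 2 ^ k * (b - a))).indicator
        (fun s => ENNReal.ofReal (w s)) t * ENNReal.ofReal (4 / (4 ^ k * (b - a) ^ 2)) := by
  have hℓ : 0 < b - a := sub_pos.2 hab
  have hdist : (b - a) / 2 < |t - (a + b) / 2| := by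
    simp only [mem_Icc, not_and_or, not_le] at ht
    rcases ht with h | h
    · rw [lt_abs]; right; linarith
    · rw [lt_abs]; left; linarith
  obtain ⟨k, hk, hk'⟩ := exists_pow_two_mul_le_of_half_lt hℓ hdist
  have hmem : t ∈ Icc ((a + b) / 2 - 2 ^ k * (b - a)) ((a + b) / 2 + 2 ^ k * (b - a)) := by
    rw [abs_le] at hk
    constructor <;> linarith [hk.1, hk.2]
  refine le_trans ?_ (ENNReal.le_tsum k)
  rw [indicator_of_mem hmem, ← ENNReal.ofReal_mul (hw t)]
  refine ENNReal.ofReal_le_ofReal ?_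
  calc w t / (t - (a + b) / 2) ^ 2 ≤ w t / (4 ^ k * (b - a) ^ 2 / 4) :=
        div_le_div_of_nonneg_left (hw t) (by positivity) (by linarith)
    _ = w t * (4 / (4 ^ k * (b - a) ^ 2)) := by field_simp

theorem lintegral_compl_Icc_div_sq_le {w : ℝ → ℝ} (hw : Measurable w) (hw0 : ∀ t, 0 ≤ w t)
    {a b : ℝ} (hab : a < b) {M : ℝ≥0∞} {θ : ℝ} (hθ : θ < 1)
    (hgrowth : ∀ α β, α ≤ a → b ≤ β → ∫⁻ t in Icc α β, ENNReal.ofReal (w t) ≤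
      M * ENNReal.ofReal (β - α) * (ENNReal.ofReal (β - α) / ENNReal.ofReal (b - a)) ^ θ) :
    ENNReal.ofReal (b - a) * ∫⁻ t in (Icc a b)ᶜ, ENNReal.ofReal (w t / (t - (a + b) / 2) ^ 2) ≤
      M * ENNReal.ofReal (8 * 2 ^ θ / (1 - 2 ^ θ / 2)) := by
  set c := (a + b) / 2
  set ℓ := b - a
  have hℓ : 0 < ℓ := sub_pos.2 hab
  have ha : a = c - ℓ / 2 := by simp only [c, ℓ]; ring
  have hb : b = c + ℓ / 2 := by simp only [c, ℓ]; ring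
  set J : ℕ → Set ℝ := fun k => Icc (c - 2 ^ k * ℓ) (c + 2 ^ k * ℓ)
  have hr0 : (0 : ℝ) ≤ 2 ^ θ / 2 := by positivity
  have hr1 : (2 : ℝ) ^ θ / 2 < 1 := by
    rw [div_lt_one two_pos]
    simpa using Real.rpow_lt_rpow_of_exponent_lt one_lt_two hθ
  have hterm : ∀ k : ℕ, ENNReal.ofReal ℓ *
      ((∫⁻ t in J k, ENNReal.ofReal (w t)) * ENNReal.ofReal (4 / (4 ^ k * ℓ ^ 2))) ≤
      M * ENNReal.ofReal (8 * 2 ^ θ * (2 ^ θ / 2) ^ k) := fun k => by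
    have h1 : (1 : ℝ) ≤ 2 ^ k := one_le_pow₀ one_le_two
    have hJ := hgrowth (c - 2 ^ k * ℓ) (c + 2 ^ k * ℓ) (by nlinarith) (by nlinarith)
    rw [show c + 2 ^ k * ℓ - (c - 2 ^ k * ℓ) = 2 ^ (k + 1) * ℓ by ring] at hJ
    calc _ ≤ ENNReal.ofReal ℓ * (M * ENNReal.ofReal (2 ^ (k + 1) * ℓ) *
          (ENNReal.ofReal (2 ^ (k + 1) * ℓ) / ENNReal.ofReal ℓ) ^ θ *
          ENNReal.ofReal (4 / (4 ^ k * ℓ ^ 2))) := by gcongr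
      _ = M * ENNReal.ofReal
          (ℓ * (2 ^ (k + 1) * ℓ) * ((2 : ℝ) ^ (k + 1)) ^ θ * (4 / (4 ^ k * ℓ ^ 2))) := by
        rw [← ENNReal.ofReal_div_of_pos hℓ, mul_div_cancel_right₀ _ hℓ.ne',
          ENNReal.ofReal_rpow_of_pos (by positivity),
          ENNReal.ofReal_mul (by positivity : 0 ≤ ℓ * (2 ^ (k + 1) * ℓ) * (2 ^ (k + 1) : ℝ) ^ θ),
          ENNReal.ofReal_mul (by positivity : 0 ≤ ℓ * (2 ^ (k + 1) * ℓ)),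
          ENNReal.ofReal_mul hℓ.le]
        ring
      _ = M * ENNReal.ofReal (8 * 2 ^ θ * (2 ^ θ / 2) ^ k) := by
        rw [← Real.rpow_pow_comm zero_le_two, div_pow, show (4 : ℝ) ^ k = 2 ^ k * 2 ^ k by
          rw [← mul_pow]; norm_num]
        congr 2
        field_simp
        ring
  calc ENNReal.ofReal ℓ * ∫⁻ t in (Icc a b)ᶜ, ENNReal.ofReal (w t / (t - c) ^ 2)
      ≤ ENNReal.ofReal ℓ * ∫⁻ t, ∑' k : ℕ, (J k).indicator (fun s => ENNReal.ofReal (w s)) t *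
          ENNReal.ofReal (4 / (4 ^ k * ℓ ^ 2)) := by
        refine mul_le_mul_right ?_ _
        exact (setLIntegral_mono' measurableSet_Icc.compl fun t ht =>
          ofReal_div_sq_le_tsum_indicator hw0 hab ht).trans (setLIntegral_le_lintegral _ _)
    _ = ∑' k : ℕ, ENNReal.ofReal ℓ *
          ((∫⁻ t in J k, ENNReal.ofReal (w t)) * ENNReal.ofReal (4 / (4 ^ k * ℓ ^ 2))) := by
        rw [lintegral_tsum fun k => ((hw.ennreal_ofReal.indicator measurableSet_Icc).mul_const
          _).aemeasurable, ← ENNReal.tsum_mul_left]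
        congr! 2 with k
        rw [lintegral_mul_const _ (hw.ennreal_ofReal.indicator measurableSet_Icc),
          lintegral_indicator measurableSet_Icc]
    _ ≤ ∑' k : ℕ, M * ENNReal.ofReal (8 * 2 ^ θ * (2 ^ θ / 2) ^ k) := ENNReal.tsum_le_tsum hterm
    _ = M * ENNReal.ofReal (8 * 2 ^ θ / (1 - 2 ^ θ / 2)) := by
        rw [ENNReal.tsum_mul_left, ← ENNReal.ofReal_tsum_of_nonneg (fun k => by positivity)
          ((summable_geometric_of_lt_one hr0 hr1).mul_left _), tsum_mul_left,
          tsum_geometric_of_lt_one hr0 hr1, ← div_eq_mul_inv (8 * 2 ^ θ)]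

end DyadicTail

theorem stmt10_general (n : ℕ) (p : ℝ) (hp1 : 1 < p)
    (Wp : ℝ → Matrix (Fin n) (Fin n) ℂ)
    (hWmeas : ∀ i j, Measurable fun x => Wp x i j)
    (hWpos : ∀ᵐ x : ℝ, (Wp x).PosDef)
    (V : ℝ → ℝ → Matrix (Fin n) (Fin n) ℂ)
    (hVpos : ∀ a b : ℝ, a < b → (V a b).PosDef)
    (c₁ c₂ : ℝ)
    (hred : ∀ a b : ℝ, a < b → ∀ e : Fin n → ℂ,
      ENNReal.ofReal (c₁ * eN ((V a b).mulVec e)) ≤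
        ((ENNReal.ofReal (b - a))⁻¹ *
          ∫⁻ x in Set.Icc a b, ENNReal.ofReal (eN ((Wp x).mulVec e) ^ p)) ^ (1 / p) ∧
      ((ENNReal.ofReal (b - a))⁻¹ *
          ∫⁻ x in Set.Icc a b, ENNReal.ofReal (eN ((Wp x).mulVec e) ^ p)) ^ (1 / p) ≤
        ENNReal.ofReal (c₂ * eN ((V a b).mulVec e)))
    (CAp : ℝ)
    (hAp : ∀ a b : ℝ, a < b →
      (ENNReal.ofReal (b - a))⁻¹ *
        ∫⁻ x in Set.Icc a b,
          ((ENNReal.ofReal (b - a))⁻¹ *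
            ∫⁻ t in Set.Icc a b,
              ENNReal.ofReal (opN (Wp x * (Wp t)⁻¹) ^ (p / (p - 1)))) ^ (p / (p / (p - 1)))
        ≤ ENNReal.ofReal CAp) :
    ∃ C : ℝ, ∀ a b : ℝ, a < b →
      ENNReal.ofReal (b - a) *
          ∫⁻ t in (Set.Icc a b)ᶜ,
            ENNReal.ofReal (opN ((V a b)⁻¹ * Wp t) / (t - (a + b) / 2) ^ 2) ≤
        ENNReal.ofReal C := by
  have hpq : p.HolderConjugate (p / (p - 1)) := .conjExponent hp1
  have hθ : 1 / (p / (p - 1)) < 1 := by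
    rw [div_lt_one hpq.symm.pos]; exact hpq.symm.lt
  set θ := 1 / (p / (p - 1))
  set M : ℝ≥0∞ := n * (ENNReal.ofReal c₂ * ENNReal.ofReal CAp ^ (1 / p))
  refine ⟨(M * ENNReal.ofReal (8 * 2 ^ θ / (1 - 2 ^ θ / 2))).toReal, fun a b hab => ?_⟩
  rw [ENNReal.ofReal_toReal (by finiteness)]
  have hV := hVpos a b hab
  have hgrowth : ∀ α β, α ≤ a → b ≤ β →
      ∫⁻ t in Set.Icc α β, ENNReal.ofReal (∑ j, eN (Wp t *ᵥ ((V a b)⁻¹ *ᵥ Pi.single j 1))) ≤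
        M * ENNReal.ofReal (β - α) * (ENNReal.ofReal (β - α) / ENNReal.ofReal (b - a)) ^ θ :=
    fun α β hα hβ => by
      simpa only [Real.volume_Icc, M, mul_assoc] using setLIntegral_sum_eN_mulVec_inv_le hpq
        hWmeas hWpos hV (Set.Icc_subset_Icc hα hβ) (by simpa using hab) (by simp) (by simp)
        (fun e => by simpa only [Real.volume_Icc] using (hred a b hab e).2)
        (by simpa only [Real.volume_Icc] using hAp α β (hab.trans_le hβ |>.trans_le' hα))
  calc ENNReal.ofReal (b - a) * ∫⁻ t in (Set.Icc a b)ᶜ,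
        ENNReal.ofReal (opN ((V a b)⁻¹ * Wp t) / (t - (a + b) / 2) ^ 2)
      ≤ ENNReal.ofReal (b - a) * ∫⁻ t in (Set.Icc a b)ᶜ, ENNReal.ofReal
          ((∑ j, eN (Wp t *ᵥ ((V a b)⁻¹ *ᵥ Pi.single j 1))) / (t - (a + b) / 2) ^ 2) := by
        refine mul_le_mul_right (lintegral_mono_ae (ae_restrict_of_ae (hWpos.mono fun t ht => ?_)))
          _
        exact ENNReal.ofReal_le_ofReal
          (div_le_div_of_nonneg_right (opN_inv_mul_le_sum_eN hV.1 ht.1) (sq_nonneg _))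
    _ ≤ M * ENNReal.ofReal (8 * 2 ^ θ / (1 - 2 ^ θ / 2)) :=
        lintegral_compl_Icc_div_sq_le
          (Finset.measurable_sum _ fun j _ => measurable_eN_mulVec hWmeas _)
          (fun t => Finset.sum_nonneg fun j _ => eN_nonneg _) hab hθ hgrowth

/-- Let `Wp` play the role of `W^{1/p}` for a matrix `A_p` weight `W` on ℝ, `1 < p ≤ 2`, with
reducing operators `V_{[a,b]}` satisfying `|I|^{-1/p} ‖1_I W^{1/p} e‖_{L^p} ≈ |V_I e|`.
Then with `w_I(t) = ‖V_I⁻¹ W^{1/p}(t)‖`, the weight `W` satisfies the `B_{2,p}` condition: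
`sup_I |I| ∫_{ℝ∖I} w_I(t)/|t - c_I|² dt < ∞`. -/
theorem stmt10 (n : ℕ) (p : ℝ) (hp1 : 1 < p) (hp2 : p ≤ 2)
    (Wp : ℝ → Matrix (Fin n) (Fin n) ℂ)
    (hWmeas : ∀ i j, Measurable fun x => Wp x i j)
    (hWpos : ∀ᵐ x : ℝ, (Wp x).PosDef)
    (V : ℝ → ℝ → Matrix (Fin n) (Fin n) ℂ)
    (hVpos : ∀ a b : ℝ, a < b → (V a b).PosDef)
    (c₁ c₂ : ℝ) (hc₁ : 0 < c₁) (hc₂ : 0 < c₂)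
    (hred : ∀ a b : ℝ, a < b → ∀ e : Fin n → ℂ,
      ENNReal.ofReal (c₁ * eN ((V a b).mulVec e)) ≤
        ((ENNReal.ofReal (b - a))⁻¹ *
          ∫⁻ x in Set.Icc a b, ENNReal.ofReal (eN ((Wp x).mulVec e) ^ p)) ^ (1 / p) ∧
      ((ENNReal.ofReal (b - a))⁻¹ *
          ∫⁻ x in Set.Icc a b, ENNReal.ofReal (eN ((Wp x).mulVec e) ^ p)) ^ (1 / p) ≤
        ENNReal.ofReal (c₂ * eN ((V a b).mulVec e)))
    (CAp : ℝ)
    (hAp : ∀ a b : ℝ, a < b →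
      (ENNReal.ofReal (b - a))⁻¹ *
        ∫⁻ x in Set.Icc a b,
          ((ENNReal.ofReal (b - a))⁻¹ *
            ∫⁻ t in Set.Icc a b,
              ENNReal.ofReal (opN (Wp x * (Wp t)⁻¹) ^ (p / (p - 1)))) ^ (p / (p / (p - 1)))
        ≤ ENNReal.ofReal CAp) :
    ∃ C : ℝ, ∀ a b : ℝ, a < b →
      ENNReal.ofReal (b - a) *
          ∫⁻ t in (Set.Icc a b)ᶜ,
            ENNReal.ofReal (opN ((V a b)⁻¹ * Wp t) / (t - (a + b) / 2) ^ 2) ≤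
        ENNReal.ofReal C :=
  stmt10_general n p hp1 Wp hWmeas hWpos V hVpos c₁ c₂ hred CAp hAp
end
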